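/- arXiv:2210.06899 — 2 statements merged into one kernel-verified Lean document; each statement's English description precedes it below -/
import Mathlib

section
/- Let 𝒯 be a projective Fraïssé family of finite trees with weakly coherent epimorphisms that allows splitting edges, let ⟨F_i⟩ be a Fraïssé sequence for 𝒯 and let 𝔽 ⊆ ∏ F_i be its projective Fraïssé limit. If e = (e_n) ∈ 𝔽 and there is N such that for every m ≥ N the vertex e_m is an endpoint of the finite tree F_m, then e is an endpoint of the topological graph 𝔽. -/
open SimpleGraph

namespace PF

/-! ### Basic graph notions (graphs are simple graphs; the reflexive edge relation
of the paper corresponds to `G.Adj x y ∨ x = y`). -/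

/-- The order of a vertex: its number of neighbours, which for a finite tree equals
the number of connected components of the complement of the vertex. -/
noncomputable def ord {V : Type*} (T : SimpleGraph V) (a : V) : ℕ :=
  Nat.card (T.neighborSet a)

/-- The graph obtained by deleting the vertex `a`. -/
def del {V : Type*} (T : SimpleGraph V) (a : V) : SimpleGraph {x : V // x ≠ a} :=
  SimpleGraph.comap Subtype.val T

/-- `x` and `y` are vertices different from `a` lying in the same connected component
of `T ∖ {a}`. -/
def SameComp {V : Type*} (T : SimpleGraph V) (a x y : V) : Prop :=
  ∃ (hx : x ≠ a) (hy : y ≠ a), (del T a).Reachable ⟨x, hx⟩ ⟨y, hy⟩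

/-- Epimorphism of graphs (in the reflexive convention of the paper): a vertex surjection
such that a (nontrivial) edge is present in the codomain iff it is witnessed by an edge
between the fibers. -/
def IsEpi {V W : Type*} (B : SimpleGraph W) (A : SimpleGraph V) (f : W → V) : Prop :=
  Function.Surjective f ∧
    ∀ a a' : V, A.Adj a a' ↔ (a ≠ a' ∧ ∃ b b', f b = a ∧ f b' = a' ∧ B.Adj b b')

/-- A map is monotone if every fiber induces a connected subgraph. -/
def IsMonotone {V W : Type*} (B : SimpleGraph W) (f : W → V) : Prop :=
  ∀ a : V, (SimpleGraph.comap (Subtype.val : (f ⁻¹' {a}) → W) B).Connected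

/-- `b` witnesses the weak coherence of `f : B → A` at `a`: `b` is in the fiber of `a`,
has order at least that of `a`, and the assignment sending a connected component of
`A ∖ {a}` to the connected component of `B ∖ {b}` containing its preimage is a
well-defined injection. -/
def IsWeakWitness {V W : Type*} (A : SimpleGraph V) (B : SimpleGraph W)
    (f : W → V) (a : V) (b : W) : Prop :=
  f b = a ∧ ord A a ≤ ord B b ∧
    ∀ x y : W, f x ≠ a → f y ≠ a →
      (SameComp A a (f x) (f y) ↔ SameComp B b x y)

/-- `b` witnesses the coherence of `f : B → A` at `a`: weak coherence where moreover
`b` has the same order as `a` (so the induced injection between components is a bijection). -/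
def IsCohWitness {V W : Type*} (A : SimpleGraph V) (B : SimpleGraph W)
    (f : W → V) (a : V) (b : W) : Prop :=
  IsWeakWitness A B f a b ∧ ord B b = ord A a

/-- `f : B → A` is weakly coherent: every ramification point of `A` is a point of
weak coherence for `f`. -/
def WeaklyCoherent {V W : Type*} (A : SimpleGraph V) (B : SimpleGraph W) (f : W → V) : Prop :=
  ∀ a : V, 3 ≤ ord A a → ∃ b, IsWeakWitness A B f a b

/-- `f : B → A` is coherent: every ramification point of `A` is a point of coherence for `f`. -/
def Coherent {V W : Type*} (A : SimpleGraph V) (B : SimpleGraph W) (f : W → V) : Prop :=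
  ∀ a : V, 3 ≤ ord A a → ∃ b, IsCohWitness A B f a b

/-! ### The families `𝓕_P` and `𝓖_P` -/

/-- Membership in the family `𝓕_P`: a finite tree with no vertex of order 2. -/
def MemF {V : Type*} (A : SimpleGraph V) : Prop :=
  A.IsTree ∧ ∀ a : V, ord A a ≠ 2

/-- Epimorphisms of the family `𝓕_P` (for `P ⊆ {3,4,…,∞}`, `∞ = ⊤ ∈ P`): monotone
epimorphisms, coherent at points of order in `P`, and weakly coherent at all other
ramification points with a witness of order not in `P`. -/
def EpiF (P : Set ℕ∞) {V W : Type*} (A : SimpleGraph V) (B : SimpleGraph W) (f : W → V) : Prop :=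
  IsEpi B A f ∧ IsMonotone B f ∧
    (∀ a : V, (ord A a : ℕ∞) ∈ P → ∃ b, IsCohWitness A B f a b) ∧
    (∀ a : V, 3 ≤ ord A a → (ord A a : ℕ∞) ∉ P →
      ∃ b, IsWeakWitness A B f a b ∧ (ord B b : ℕ∞) ∉ P)

/-- Membership in the family `𝓖_P`: a finite tree all of whose vertices are endpoints
or have order in `P`. -/
def MemG (P : Set ℕ∞) {V : Type*} (A : SimpleGraph V) : Prop :=
  A.IsTree ∧ ∀ a : V, ord A a ≤ 1 ∨ (ord A a : ℕ∞) ∈ P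

/-- Epimorphisms of the family `𝓖_P`: coherent monotone epimorphisms. -/
def EpiG {V W : Type*} (A : SimpleGraph V) (B : SimpleGraph W) (f : W → V) : Prop :=
  IsEpi B A f ∧ IsMonotone B f ∧ Coherent A B f

/-! ### Projective Fraïssé families of finite graphs -/

/-- A finite graph, on a vertex set `Fin n`.  (Since every finite graph is isomorphic
to one of this form, a family of such graphs automatically has only countably many
isomorphism types.) -/
structure FGraph where
  card : ℕ
  graph : SimpleGraph (Fin card)

/-- A class of finite graphs together with a distinguished class of epimorphisms:
`mor A B f` means that `f` is a distinguished epimorphism from `B` onto `A`. -/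
structure Family where
  obj : FGraph → Prop
  mor : ∀ A B : FGraph, (Fin B.card → Fin A.card) → Prop

/-- `T` is a projective Fraïssé family. -/
structure IsPFF (T : Family) : Prop where
  mor_obj : ∀ A B f, T.mor A B f → T.obj A ∧ T.obj B
  mor_epi : ∀ A B f, T.mor A B f → IsEpi B.graph A.graph f
  id_mem : ∀ A, T.obj A → T.mor A A id
  comp_mem : ∀ A B C f g, T.mor A B f → T.mor B C g → T.mor A C (f ∘ g)
  jpp : ∀ A B, T.obj A → T.obj B → ∃ C f g, T.mor A C f ∧ T.mor B C g
  amalg : ∀ A B C f g, T.mor A B f → T.mor A C g →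
    ∃ D h k, T.mor B D h ∧ T.mor C D k ∧ f ∘ h = g ∘ k

/-- An inverse sequence in the family `T`. -/
structure FSeq (T : Family) where
  F : ℕ → FGraph
  bond : ∀ m n, n ≤ m → Fin (F m).card → Fin (F n).card
  bond_refl : ∀ n x, bond n n le_rfl x = x
  bond_comp : ∀ k m n (h1 : n ≤ m) (h2 : m ≤ k) x,
    bond m n h1 (bond k m h2 x) = bond k n (h1.trans h2) x
  bond_mor : ∀ m n (h : n ≤ m), T.mor (F n) (F m) (bond m n h)

/-- A Fraïssé sequence for the family `T`. -/
structure IsFraisseSeq (T : Family) (S : FSeq T) : Prop where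
  proj : ∀ A, T.obj A → ∃ n f, T.mor A (S.F n) f
  extend : ∀ n (A : FGraph) (f : Fin A.card → Fin (S.F n).card), T.mor (S.F n) A f →
    ∃ (m : ℕ) (h : n ≤ m) (g : Fin (S.F m).card → Fin A.card),
      T.mor A (S.F m) g ∧ f ∘ g = S.bond m n h

/-- The projective Fraïssé limit of a sequence: the inverse limit of the sequence,
as a closed subspace of the product of the (discrete) finite vertex sets. -/
def Limit {T : Family} (S : FSeq T) : Type :=
  {x : ∀ n, Fin (S.F n).card // ∀ m n (h : n ≤ m), S.bond m n h (x m) = x n}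

instance {T : Family} (S : FSeq T) : TopologicalSpace (Limit S) := by
  unfold Limit; infer_instance

/-- The (reflexive) edge relation of the limit. -/
def EdgeRel {T : Family} (S : FSeq T) (x y : Limit S) : Prop :=
  ∀ n, x.1 n = y.1 n ∨ (S.F n).graph.Adj (x.1 n) (y.1 n)

/-- The simple graph on the limit determined by the nontrivial edges. -/
def limitGraph {T : Family} (S : FSeq T) : SimpleGraph (Limit S) where
  Adj x y := x ≠ y ∧ EdgeRel S x y
  symm := by
    constructor
    intro x y h
    exact ⟨h.1.symm, fun n => (h.2 n).imp Eq.symm SimpleGraph.Adj.symm⟩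
  loopless := ⟨fun x h => h.1 rfl⟩

/-- The topological realization of the limit: the quotient by the edge relation. -/
def Realization {T : Family} (S : FSeq T) : Type := Quot (EdgeRel S)

/-- The quotient map onto the topological realization. -/
def realMap {T : Family} (S : FSeq T) : Limit S → Realization S := Quot.mk _

instance {T : Family} (S : FSeq T) : TopologicalSpace (Realization S) := by
  unfold Realization; infer_instance

/-! ### Splitting edges -/

/-- The graph obtained from `A` by splitting the edge `⟨a,b⟩`: a new vertex `∗` is added,
the edge `⟨a,b⟩` is removed and replaced by the edges `⟨a,∗⟩` and `⟨∗,b⟩`. -/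
def splitGraph {k : ℕ} (A : SimpleGraph (Fin k)) (a b : Fin k) : SimpleGraph (Fin (k + 1)) :=
  SimpleGraph.fromRel fun x y =>
    (∃ x' y' : Fin k, x = x'.castSucc ∧ y = y'.castSucc ∧ A.Adj x' y' ∧
      ¬(x' = a ∧ y' = b) ∧ ¬(x' = b ∧ y' = a)) ∨
    (x = Fin.last k ∧ (y = a.castSucc ∨ y = b.castSucc))

/-- The map collapsing the new vertex `∗` of the split graph to the vertex `c`. -/
def splitMap {k : ℕ} (c : Fin k) : Fin (k + 1) → Fin k :=
  fun x => Fin.lastCases c (fun y => y) x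

/-- A family allows splitting edges if it is closed under splitting an edge, together
with the two maps collapsing the new vertex to either endpoint of the split edge. -/
def AllowsSplitting (T : Family) : Prop :=
  ∀ (A : FGraph) (a b : Fin A.card), T.obj A → A.graph.Adj a b →
    T.obj ⟨A.card + 1, splitGraph A.graph a b⟩ ∧
    T.mor A ⟨A.card + 1, splitGraph A.graph a b⟩ (splitMap a) ∧
    T.mor A ⟨A.card + 1, splitGraph A.graph a b⟩ (splitMap b)

/-! ### Points of weak coherence in the limit -/

/-- A point of the limit is a point of weak coherence if from some index on, each
coordinate is a point of weak coherence of the bonding map from the next level,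
witnessed by the next coordinate. -/
def LimitWeakCohPoint {T : Family} (S : FSeq T) (x : Limit S) : Prop :=
  ∃ k : ℕ, ∀ l, k ≤ l →
    3 ≤ ord (S.F l).graph (x.1 l) ∧
    IsWeakWitness (S.F l).graph (S.F (l + 1)).graph
      (S.bond (l + 1) l (Nat.le_succ l)) (x.1 l) (x.1 (l + 1))

/-! ### Topological notions: number of branches at a point, dendrites, arcs -/

/-- The order of a point of a topological space: the number (in `ℕ∞`) of connected
components of the complement of the point. -/
noncomputable def ordAt (X : Type*) [TopologicalSpace X] (x : X) : ℕ∞ :=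
  ENat.card (ConnectedComponents {y : X // y ≠ x})

/-- `A` is an arc in `X` from `x` to `y`: the image of a continuous injection of the
unit interval sending `0` to `x` and `1` to `y`. -/
def IsArcSet {X : Type*} [TopologicalSpace X] (A : Set X) (x y : X) : Prop :=
  ∃ f : unitInterval → X, Continuous f ∧ Function.Injective f ∧
    Set.range f = A ∧ f 0 = x ∧ f 1 = y

/-- A dendrite: a nondegenerate compact connected locally connected metrizable space in
which every two distinct points are joined by a unique arc. -/
def IsDendrite (X : Type*) [TopologicalSpace X] : Prop :=
  Nontrivial X ∧ CompactSpace X ∧ ConnectedSpace X ∧ LocallyConnectedSpace X ∧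
    TopologicalSpace.MetrizableSpace X ∧
    ∀ x y : X, x ≠ y → ∃! A : Set X, IsArcSet A x y

/-- A set is arcwise dense if every arc with distinct endpoints meets it. -/
def ArcwiseDense {X : Type*} [TopologicalSpace X] (s : Set X) : Prop :=
  ∀ x y : X, x ≠ y → ∀ A : Set X, IsArcSet A x y → ∃ z ∈ s, z ∈ A

/-! ### Topological graphs, graph-arcs and endpoints -/

/-- A topological graph: a compact Hausdorff zero-dimensional second countable space
with a closed (reflexive) edge relation. -/
def IsTopGraph (X : Type*) [TopologicalSpace X] (G : SimpleGraph X) : Prop :=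
  CompactSpace X ∧ T2Space X ∧ TotallyDisconnectedSpace X ∧
    SecondCountableTopology X ∧ IsClosed {p : X × X | G.Adj p.1 p.2 ∨ p.1 = p.2}

/-- Connectedness of a topological graph: there is no partition of the vertex set into
two nonempty disjoint closed sets with no edge between them. -/
def GraphConn (X : Type*) [TopologicalSpace X] (G : SimpleGraph X) : Prop :=
  ¬ ∃ s t : Set X, IsClosed s ∧ IsClosed t ∧ s.Nonempty ∧ t.Nonempty ∧
      Disjoint s t ∧ s ∪ t = Set.univ ∧ ∀ a ∈ s, ∀ b ∈ t, ¬ G.Adj a b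

/-- The topological graph obtained by deleting the vertex `a` remains connected. -/
def GraphConnDel (X : Type*) [TopologicalSpace X] (G : SimpleGraph X) (a : X) : Prop :=
  GraphConn {v : X // v ≠ a} (G.comap Subtype.val)

/-- A topological graph is an arc if it is connected and all but at most two of its
vertices disconnect it when removed. -/
def IsArcGraph (X : Type*) [TopologicalSpace X] (G : SimpleGraph X) : Prop :=
  GraphConn X G ∧ ∃ e : Set X, (∃ u v : X, e ⊆ {u, v}) ∧
    ∀ a : X, a ∉ e → ¬ GraphConnDel X G a

/-- An endpoint of a topological graph which is an arc: a vertex whose removal does not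
disconnect it. -/
def ArcEndpoint (X : Type*) [TopologicalSpace X] (G : SimpleGraph X) (a : X) : Prop :=
  GraphConnDel X G a

/-- `x` is an endpoint of the topological graph `Gr` on `Y`: whenever a topological
graph which is an arc embeds into `Gr` with `x` in the image, `x` is the image of an
endpoint of the arc. -/
def GraphEndpoint (Y : Type*) [TopologicalSpace Y] (Gr : SimpleGraph Y) (x : Y) : Prop :=
  ∀ (X : Type) [TopologicalSpace X] (H : SimpleGraph X), IsTopGraph X H → IsArcGraph X H →
    ∀ h : X → Y, Function.Injective h →
      (‹TopologicalSpace X› = TopologicalSpace.induced h inferInstance) →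
      (∀ a b : X, H.Adj a b ↔ Gr.Adj (h a) (h b)) →
      x ∈ Set.range h → ∃ e : X, ArcEndpoint X H e ∧ h e = x

/-! ### Betweenness and immersions in finite trees -/

/-- `y` lies between `x` and `z`: every walk from `x` to `z` passes through `y`
(in a tree, this says exactly that `y` lies on the unique path from `x` to `z`). -/
def Between {V : Type*} (T : SimpleGraph V) (x y z : V) : Prop :=
  ∀ p : T.Walk x z, y ∈ p.support

/-- An immersion of `A` into `B`: a map preserving and reflecting betweenness of
pairwise distinct vertices. -/
def IsImmersion {V W : Type*} (A : SimpleGraph V) (B : SimpleGraph W) (i : V → W) : Prop :=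
  ∀ a b c : V, a ≠ b → b ≠ c → a ≠ c →
    (Between A a b c ↔ Between B (i a) (i b) (i c))

/-! ### The families `𝓖_P` and `𝓕_P` as families of finite graphs -/

/-- The family `𝓖_P` as a family of finite graphs with distinguished epimorphisms. -/
def familyG (P : Set ℕ∞) : Family where
  obj A := MemG P A.graph
  mor A B f := MemG P A.graph ∧ MemG P B.graph ∧ EpiG A.graph B.graph f

/-- The family `𝓕_P` as a family of finite graphs with distinguished epimorphisms. -/
def familyF (P : Set ℕ∞) : Family where
  obj A := MemF A.graph
  mor A B f := MemF A.graph ∧ MemF B.graph ∧ EpiF P A.graph B.graph f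

end PF


namespace EP

variable {V : Type*} {T : SimpleGraph V}

lemma reachable_del_of_walk {a : V} : ∀ {x y : V} (p : T.Walk x y) (hx : x ≠ a) (hy : y ≠ a),
    a ∉ p.support → (PF.del T a).Reachable ⟨x, hx⟩ ⟨y, hy⟩ := by
  intro x y p
  induction p with
  | nil => intro hx hy _; exact Reachable.refl _
  | @cons u b y hadj p ih =>
    intro hx hy hsup
    have hb : b ≠ a := by
      rintro rfl
      exact hsup (by rw [Walk.support_cons]; exact List.mem_cons_of_mem _ p.start_mem_support)
    have h1 : (PF.del T a).Adj ⟨u, hx⟩ ⟨b, hb⟩ := hadj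
    exact (h1.reachable).trans (ih hb hy (fun hmem => hsup (by simp [Walk.support_cons, hmem])))

lemma not_between_of_sameComp {a x y : V} (hs : PF.SameComp T a x y) : ¬ PF.Between T x a y := by
  obtain ⟨hx, hy, hr⟩ := hs
  obtain ⟨q⟩ := hr
  intro hb
  have hmem := hb (q.map ⟨Subtype.val, fun h => h⟩)
  rw [Walk.support_map, List.mem_map] at hmem
  obtain ⟨z, _, hz⟩ := hmem
  exact z.2 hz

lemma between_of_not_sameComp {a x y : V} (hx : x ≠ a) (hy : y ≠ a)
    (hns : ¬ PF.SameComp T a x y) : PF.Between T x a y := by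
  intro p
  by_contra hmem
  exact hns ⟨hx, hy, reachable_del_of_walk p hx hy hmem⟩

lemma length_eq_dist (hac : T.IsAcyclic) {u v : V} (p : T.Walk u v) (hp : p.IsPath) :
    p.length = T.dist u v := by
  obtain ⟨q, hq, hql⟩ := (Reachable.exists_path_of_dist ⟨p⟩)
  have := hac.path_unique ⟨p, hp⟩ ⟨q, hq⟩
  rw [show p = q from congrArg Subtype.val this]
  exact hql

lemma between_dist (hac : T.IsAcyclic) [DecidableEq V] {x m y : V} (hb : PF.Between T x m y)
    (hr : T.Reachable x y) : T.dist x m + T.dist m y = T.dist x y := by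
  obtain ⟨p, hp, hpl⟩ := hr.exists_path_of_dist
  have hm : m ∈ p.support := hb p
  have h1 := length_eq_dist hac (p.takeUntil m hm) (hp.takeUntil hm)
  have h2 := length_eq_dist hac (p.dropUntil m hm) (hp.dropUntil hm)
  have h3 : (p.takeUntil m hm).length + (p.dropUntil m hm).length = p.length := by
    rw [← Walk.length_append, Walk.take_spec]
  omega

lemma eq_of_mem_path_of_dist_eq (hac : T.IsAcyclic) [DecidableEq V] :
    ∀ {u v : V} (p : T.Walk u v), p.IsPath →
    ∀ {m w}, m ∈ p.support → w ∈ p.support → T.dist u m = T.dist u w → m = w := by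
  intro u v p
  induction p with
  | nil =>
    intro _ m w hm hw _
    simp only [Walk.support_nil, List.mem_singleton] at hm hw
    rw [hm, hw]
  | @cons u b v hadj p ih =>
    intro hp m w hm hw hd
    obtain ⟨hp', hu⟩ := (Walk.cons_isPath_iff _ _).mp hp
    have key : ∀ {z}, z ∈ p.support → T.dist u z = T.dist b z + 1 := by
      intro z hz
      have hq : (Walk.cons hadj (p.takeUntil z hz)).IsPath := by
        rw [Walk.cons_isPath_iff]
        exact ⟨hp'.takeUntil hz, fun hmem => hu (Walk.support_takeUntil_subset _ hz hmem)⟩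
      have := length_eq_dist hac _ hq
      rw [Walk.length_cons, length_eq_dist hac _ (hp'.takeUntil hz)] at this
      omega
    rcases List.mem_cons.mp (by simpa [Walk.support_cons] using hm) with rfl | hm'
    · rcases List.mem_cons.mp (by simpa [Walk.support_cons] using hw) with rfl | hw'
      · rfl
      · exfalso
        rw [SimpleGraph.dist_self] at hd
        have : T.dist m w ≠ 0 := by rw [key hw']; omega
        omega
    · rcases List.mem_cons.mp (by simpa [Walk.support_cons] using hw) with rfl | hw'
      · exfalso
        rw [SimpleGraph.dist_self] at hd
        have : T.dist w m ≠ 0 := by rw [key hm']; omega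
        omega
      · exact ih hp' hm' hw' (by have := key hm'; have := key hw'; omega)

lemma between_of_mem_path (hac : T.IsAcyclic) [DecidableEq V] {u v w : V} (p : T.Walk u v) (hp : p.IsPath)
    (hw : w ∈ p.support) : PF.Between T u w v := by
  intro W
  have h1 : p = W.bypass := congrArg Subtype.val
    (hac.path_unique ⟨p, hp⟩ ⟨W.bypass, W.bypass_isPath⟩)
  exact W.support_bypass_subset (h1 ▸ hw)

lemma between_trans [DecidableEq V] {e a m x : V} (h1 : PF.Between T e a x)
    (h2 : PF.Between T a m x) : PF.Between T e m x := by
  intro W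
  have ha := h1 W
  exact Walk.support_dropUntil_subset W ha (h2 (W.dropUntil a ha))

lemma median_exists_aux (hac : T.IsAcyclic) [DecidableEq V] :
    ∀ (n : ℕ) ⦃e x y : V⦄ (p : T.Walk e x) (q : T.Walk e y), p.length ≤ n →
    p.IsPath → q.IsPath →
    ∃ m, PF.Between T x m y ∧ PF.Between T e m x ∧ PF.Between T e m y := by
  classical
  intro n
  induction n with
  | zero =>
    intro e x y p q hn _ _
    cases p with
    | nil => exact ⟨e, fun W => W.start_mem_support, fun W => W.start_mem_support,
        fun W => W.start_mem_support⟩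
    | cons h p' => simp [Walk.length_cons] at hn
  | succ n ih =>
    intro e x y p q hn hp hq
    cases p with
    | nil => exact ⟨e, fun W => W.start_mem_support, fun W => W.start_mem_support,
        fun W => W.start_mem_support⟩
    | @cons _ b _ h p' =>
      cases q with
      | nil => exact ⟨e, fun W => W.end_mem_support, fun W => W.start_mem_support,
          fun W => W.start_mem_support⟩
      | @cons _ b' _ h' q' =>
        obtain ⟨hp', hep'⟩ := (Walk.cons_isPath_iff _ _).mp hp
        obtain ⟨hq', heq'⟩ := (Walk.cons_isPath_iff _ _).mp hq
        by_cases hbb : b = b'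
        · subst hbb
          obtain ⟨m, hm1, hm2, hm3⟩ := ih p' q' (by simp [Walk.length_cons] at hn; omega) hp' hq'
          have hebx : PF.Between T e b x := between_of_mem_path hac _ hp
            (by simp [Walk.support_cons, p'.start_mem_support])
          have heby : PF.Between T e b y := between_of_mem_path hac _ hq
            (by simp [Walk.support_cons, q'.start_mem_support])
          exact ⟨m, hm1, between_trans hebx hm2, between_trans heby hm3⟩
        · refine ⟨e, ?_, fun W => W.start_mem_support, fun W => W.start_mem_support⟩
          intro W
          by_contra hW
          have hWW : e ∉ ((p'.append W).append q'.reverse).support := by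
            intro hmem
            rcases (Walk.mem_support_append_iff _ _).mp hmem with hmem' | hmem'
            · rcases (Walk.mem_support_append_iff _ _).mp hmem' with hmem'' | hmem''
              · exact hep' hmem''
              · exact hW hmem''
            · rw [Walk.support_reverse, List.mem_reverse] at hmem'; exact heq' hmem'
          set B := ((p'.append W).append q'.reverse).bypass with hB
          have hBpath : B.IsPath := Walk.bypass_isPath _
          have heB : e ∉ B.support := fun hmem => hWW (Walk.support_bypass_subset _ hmem)
          have hP2 : (Walk.cons h B).IsPath := (Walk.cons_isPath_iff _ _).mpr ⟨hBpath, heB⟩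
          have hP1 : (Walk.cons h' Walk.nil).IsPath := by
            simp [Walk.isPath_def, Walk.support_cons, Walk.support_nil, h'.ne]
          have heq := hac.path_unique ⟨Walk.cons h' Walk.nil, hP1⟩ ⟨Walk.cons h B, hP2⟩
          have : b ∈ (Walk.cons h' Walk.nil).support := by
            rw [show (Walk.cons h' Walk.nil) = Walk.cons h B from congrArg Subtype.val heq]
            simp [Walk.support_cons, B.start_mem_support]
          simp [Walk.support_cons, Walk.support_nil] at this
          rcases this with h1 | h1
          · exact h.ne h1.symm
          · exact hbb h1

lemma median_exists (hc : T.Connected) (hac : T.IsAcyclic) [DecidableEq V] (e x y : V) :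
    ∃ m, PF.Between T x m y ∧ PF.Between T e m x ∧ PF.Between T e m y := by
  obtain ⟨p, hp, _⟩ := (hc.preconnected e x).exists_path_of_dist
  obtain ⟨q, hq, _⟩ := (hc.preconnected e y).exists_path_of_dist
  exact median_exists_aux hac p.length p q le_rfl hp hq

lemma median_unique (hc : T.Connected) (hac : T.IsAcyclic) [DecidableEq V] {e x y m w : V}
    (m1 : PF.Between T x m y) (m2 : PF.Between T e m x) (m3 : PF.Between T e m y)
    (w1 : PF.Between T x w y) (w2 : PF.Between T e w x) (w3 : PF.Between T e w y) :
    m = w := by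
  have A := between_dist hac m2 (hc.preconnected e x)
  have B := between_dist hac m3 (hc.preconnected e y)
  have C := between_dist hac m1 (hc.preconnected x y)
  have A' := between_dist hac w2 (hc.preconnected e x)
  have B' := between_dist hac w3 (hc.preconnected e y)
  have C' := between_dist hac w1 (hc.preconnected x y)
  have c1 : T.dist x m = T.dist m x := SimpleGraph.dist_comm
  have c2 : T.dist x w = T.dist w x := SimpleGraph.dist_comm
  obtain ⟨p, hp, _⟩ := (hc.preconnected e x).exists_path_of_dist
  exact eq_of_mem_path_of_dist_eq hac p hp (m2 p) (w2 p) (by omega)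

lemma two_le_ord [Finite V] {v n1 n2 : V} (h1 : T.Adj v n1) (h2 : T.Adj v n2)
    (hne : n1 ≠ n2) : 2 ≤ PF.ord T v := by
  have hsub : ({n1, n2} : Set V) ⊆ T.neighborSet v := by
    intro z hz; rcases hz with rfl | rfl
    · exact h1
    · exact h2
  calc 2 = ({n1, n2} : Set V).ncard := (Set.ncard_pair hne).symm
    _ ≤ (T.neighborSet v).ncard := Set.ncard_le_ncard hsub (Set.toFinite _)
    _ = PF.ord T v := (Nat.card_coe_set_eq _).symm

lemma ord_ge_two_of_between (hc : T.Connected) (hac : T.IsAcyclic) [DecidableEq V] [Finite V]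
    {x v y : V} (hb : PF.Between T x v y) (hvx : v ≠ x) (hvy : v ≠ y) : 2 ≤ PF.ord T v := by
  obtain ⟨p, hp, _⟩ := (hc.preconnected x y).exists_path_of_dist
  have hv := hb p
  obtain ⟨n1, h1, r1, hr1⟩ := Walk.exists_eq_cons_of_ne hvx ((p.takeUntil v hv).reverse)
  obtain ⟨n2, h2, r2, hr2⟩ := Walk.exists_eq_cons_of_ne hvy (p.dropUntil v hv)
  refine two_le_ord h1 h2 ?_
  · intro hne
    have hn1 : n1 ∈ (p.takeUntil v hv).support := by
      have : n1 ∈ (p.takeUntil v hv).reverse.support := by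
        rw [hr1]; simp [Walk.support_cons, r1.start_mem_support]
      rwa [Walk.support_reverse, List.mem_reverse] at this
    have hn2 : n2 ∈ (p.dropUntil v hv).support.tail := by
      rw [hr2]; simp [Walk.support_cons, r2.start_mem_support]
    have hnodup : (p.support).Nodup := hp.support_nodup
    rw [← Walk.take_spec p hv, Walk.support_append] at hnodup
    have hdisj := List.disjoint_of_nodup_append hnodup
    refine hdisj hn1 ?_
    have : (p.dropUntil v hv).support.tail ⊆ (p.dropUntil v hv).support := List.tail_subset _
    rw [hne]
    exact hn2

lemma sameComp_symm {a x y : V} (h : PF.SameComp T a x y) : PF.SameComp T a y x := by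
  obtain ⟨hx, hy, hr⟩ := h; exact ⟨hy, hx, hr.symm⟩

lemma sameComp_trans {a x y z : V} (h1 : PF.SameComp T a x y) (h2 : PF.SameComp T a y z) :
    PF.SameComp T a x z := by
  obtain ⟨hx, hy, hr⟩ := h1
  obtain ⟨hy', hz, hr'⟩ := h2
  exact ⟨hx, hz, hr.trans (by convert hr' using 2)⟩

lemma ord_ge_three (hc : T.Connected) [Finite V] {m v1 v2 v3 : V}
    (h1 : v1 ≠ m) (h2 : v2 ≠ m) (h3 : v3 ≠ m)
    (h12 : ¬ PF.SameComp T m v1 v2) (h13 : ¬ PF.SameComp T m v1 v3)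
    (h23 : ¬ PF.SameComp T m v2 v3) : 3 ≤ PF.ord T m := by
  have key : ∀ {v : V}, v ≠ m → ∃ n, T.Adj m n ∧ PF.SameComp T m n v := by
    intro v hv
    obtain ⟨p, hp, _⟩ := (hc.preconnected m v).exists_path_of_dist
    obtain ⟨n, hn, r, hr⟩ := Walk.exists_eq_cons_of_ne (Ne.symm hv) p
    have hmr : m ∉ r.support := by
      rw [hr] at hp
      exact ((Walk.cons_isPath_iff _ _).mp hp).2
    exact ⟨n, hn, hn.ne', hv, reachable_del_of_walk r hn.ne' hv hmr⟩
  obtain ⟨n1, hn1, hs1⟩ := key h1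
  obtain ⟨n2, hn2, hs2⟩ := key h2
  obtain ⟨n3, hn3, hs3⟩ := key h3
  have d12 : n1 ≠ n2 := fun h => h12 (sameComp_trans (sameComp_symm hs1) (h ▸ hs2))
  have d13 : n1 ≠ n3 := fun h => h13 (sameComp_trans (sameComp_symm hs1) (h ▸ hs3))
  have d23 : n2 ≠ n3 := fun h => h23 (sameComp_trans (sameComp_symm hs2) (h ▸ hs3))
  have hsub : ({n1, n2, n3} : Set V) ⊆ T.neighborSet m := by
    intro z hz; rcases hz with rfl | rfl | rfl
    · exact hn1
    · exact hn2
    · exact hn3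
  have hcard : ({n1, n2, n3} : Set V).ncard = 3 := by
    rw [Set.ncard_insert_of_notMem (by simp [d12, d13]) (Set.toFinite _),
      Set.ncard_pair d23]
  calc 3 = ({n1, n2, n3} : Set V).ncard := hcard.symm
    _ ≤ (T.neighborSet m).ncard := Set.ncard_le_ncard hsub (Set.toFinite _)
    _ = PF.ord T m := (Nat.card_coe_set_eq _).symm

end EP

/-- Let `𝒯` be a projective Fraïssé family of finite trees with weakly
coherent (monotone) epimorphisms that allows splitting edges, let `⟨F_i⟩` be a Fraïssé
sequence for `𝒯` and `𝔽 ⊆ ∏ F_i` its projective Fraïssé limit.  If `e = (e_n) ∈ 𝔽` and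
there is `N` such that `e_m` is an endpoint of the finite tree `F_m` for every `m ≥ N`,
then `e` is an endpoint of the topological graph `𝔽`. -/
theorem endpoint_of_eventually_endpoint (T : PF.Family) (hT : PF.IsPFF T)
    (htree : ∀ A : PF.FGraph, T.obj A → A.graph.IsTree)
    (hwc : ∀ (A B : PF.FGraph) (f : Fin B.card → Fin A.card), T.mor A B f →
      PF.IsMonotone B.graph f ∧ PF.WeaklyCoherent A.graph B.graph f)
    (hsplit : PF.AllowsSplitting T)
    (S : PF.FSeq T) (hS : PF.IsFraisseSeq T S)
    (e : PF.Limit S) (hN : ∃ N : ℕ, ∀ m, N ≤ m → PF.ord (S.F m).graph (e.1 m) ≤ 1) :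
    PF.GraphEndpoint (PF.Limit S) (PF.limitGraph S) e := by
  classical
  obtain ⟨N, hN⟩ := hN
  intro X tX H hTG hArc h hinj htop hedge hx
  obtain ⟨c, hc⟩ := hx
  refine ⟨c, ?_, hc⟩
  obtain ⟨hcomp, ht2, _htd, _hsc, _hcl⟩ := hTG
  haveI := hcomp
  haveI := ht2
  have htreeF : ∀ j, (S.F j).graph.IsTree := fun j =>
    htree _ (hT.mor_obj _ _ _ (S.bond_mor j j le_rfl)).1
  have hconnF : ∀ j, (S.F j).graph.Connected := fun j => (htreeF j).isConnected
  have hacF : ∀ j, (S.F j).graph.IsAcyclic := fun j => (htreeF j).IsAcyclic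
  rintro ⟨s, t, hs_cl, ht_cl, hs_ne, ht_ne, hdisj, huniv, hst⟩
  set s' : Set X := Subtype.val '' s with hs'def
  set t' : Set X := Subtype.val '' t with ht'def
  have hcs' : c ∉ s' := by rintro ⟨z, _, hzc⟩; exact z.2 hzc
  have hct' : c ∉ t' := by rintro ⟨z, _, hzc⟩; exact z.2 hzc
  have hs't' : ∀ z, z ∈ s' → z ∈ t' → False := by
    rintro z ⟨zs, hzs, rfl⟩ ⟨zt, hzt, hzt'⟩
    have hzz : zt = zs := Subtype.ext hzt'
    exact Set.disjoint_left.mp hdisj hzs (hzz ▸ hzt)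
  have hcover : ∀ z : X, z ≠ c → z ∈ s' ∨ z ∈ t' := by
    intro z hz
    have hmem : (⟨z, hz⟩ : {v : X // v ≠ c}) ∈ s ∪ t := by rw [huniv]; trivial
    rcases hmem with hmem | hmem
    · exact Or.inl ⟨_, hmem, rfl⟩
    · exact Or.inr ⟨_, hmem, rfl⟩
  have hopen_sub : IsOpen {v : X | v ≠ c} := isOpen_compl_singleton
  have hmap : IsOpenMap (Subtype.val : {v : X // v ≠ c} → X) :=
    hopen_sub.isOpenMap_subtype_val
  have htcompl : t = sᶜ := by
    ext z
    constructor
    · intro hz hzs; exact Set.disjoint_left.mp hdisj hzs hz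
    · intro hz
      have hz2 : z ∈ s ∪ t := by rw [huniv]; trivial
      rcases hz2 with hmem | hmem
      · exact absurd hmem hz
      · exact hmem
  have hscompl : s = tᶜ := by
    rw [htcompl, compl_compl]
  have ht_open : IsOpen t := by rw [htcompl]; exact hs_cl.isOpen_compl
  have hs_open : IsOpen s := by rw [hscompl]; exact ht_cl.isOpen_compl
  have ht'_open : IsOpen t' := hmap t ht_open
  have hs'_open : IsOpen s' := hmap s hs_open
  set Ws : Set X := s' ∪ {c} with hWsdef
  set Wt : Set X := t' ∪ {c} with hWtdef
  have hcWs : c ∈ Ws := Or.inr rfl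
  have hcWt : c ∈ Wt := Or.inr rfl
  have hWs_cl : IsClosed Ws := by
    rw [← isOpen_compl_iff]
    have hcompl : Wsᶜ = t' := by
      ext z
      simp only [hWsdef, Set.mem_compl_iff, Set.mem_union, Set.mem_singleton_iff, not_or]
      constructor
      · rintro ⟨hzs, hzc⟩
        rcases hcover z hzc with hm | hm
        · exact absurd hm hzs
        · exact hm
      · intro hz
        exact ⟨fun hzs => hs't' z hzs hz, fun hzc => hct' (hzc ▸ hz)⟩
    rw [hcompl]; exact ht'_open
  have hWt_cl : IsClosed Wt := by
    rw [← isOpen_compl_iff]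
    have hcompl : Wtᶜ = s' := by
      ext z
      simp only [hWtdef, Set.mem_compl_iff, Set.mem_union, Set.mem_singleton_iff, not_or]
      constructor
      · rintro ⟨hzt, hzc⟩
        rcases hcover z hzc with hm | hm
        · exact hm
        · exact absurd hm hzt
      · intro hz
        exact ⟨fun hzt => hs't' z hz hzt, fun hzc => hcs' (hzc ▸ hz)⟩
    rw [hcompl]; exact hs'_open
  have hWsWt_union : Ws ∪ Wt = Set.univ := by
    ext z
    simp only [hWsdef, hWtdef, Set.mem_union, Set.mem_singleton_iff, Set.mem_univ, iff_true]
    by_cases hz : z = c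
    · exact Or.inl (Or.inr hz)
    · rcases hcover z hz with hm | hm
      · exact Or.inl (Or.inl hm)
      · exact Or.inr (Or.inl hm)
  have hWsWt_inter : ∀ z, z ∈ Ws → z ∈ Wt → z = c := by
    rintro z (hz | hz) (hz' | hz')
    · exact absurd hz' (fun hh => hs't' z hz hh)
    · exact hz'
    · exact hz
    · exact hz'
  have hnoedge : ∀ p ∈ Ws, ∀ q ∈ Wt, p ≠ c → q ≠ c → ¬ H.Adj p q := by
    intro p hp q hq hpc hqc hadj
    have hp' : p ∈ s' := by
      rcases hp with hm | hm
      · exact hm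
      · exact absurd hm hpc
    have hq' : q ∈ t' := by
      rcases hq with hm | hm
      · exact hm
      · exact absurd hm hqc
    obtain ⟨ps, hps, rfl⟩ := hp'
    obtain ⟨qt, hqt, rfl⟩ := hq'
    exact hst ps hps qt hqt hadj
  have hCont_h : Continuous h := continuous_iff_le_induced.mpr (le_of_eq htop)
  have hCont : ∀ j, Continuous fun p : X => (h p).1 j := fun j =>
    ((continuous_apply j).comp continuous_subtype_val).comp hCont_h
  -- generic connectivity lemma
  have hGC : ∀ (W1 W2 : Set X), IsClosed W2 → c ∈ W2 → W1 ∪ W2 = Set.univ →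
      (∀ z, z ∈ W1 → z ∈ W2 → z = c) →
      (∀ p ∈ W1, ∀ q ∈ W2, p ≠ c → q ≠ c → ¬ H.Adj p q) →
      ∀ A B : Set X, IsClosed A → IsClosed B → A ∪ B = W1 → Disjoint A B → c ∈ A →
      B.Nonempty → ∃ p ∈ A, ∃ q ∈ B, H.Adj p q := by
    intro W1 W2 hW2cl hcW2 hun hint hne A B hAcl hBcl hABW hABd hcA hBne
    by_contra hno
    push_neg at hno
    have hBW1 : B ⊆ W1 := fun z hz => hABW ▸ Or.inr hz
    have hBc : ∀ z ∈ B, z ≠ c := fun z hz hzc =>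
      Set.disjoint_right.mp hABd hz (hzc ▸ hcA)
    refine hArc.1 ⟨A ∪ W2, B, hAcl.union hW2cl, hBcl, ⟨c, Or.inl hcA⟩, hBne, ?_, ?_, ?_⟩
    · rw [Set.disjoint_left]
      rintro z (hz | hz) hzB
      · exact Set.disjoint_left.mp hABd hz hzB
      · exact hBc z hzB (hint z (hBW1 hzB) hz)
    · rw [← hun, ← hABW]
      ext z
      simp only [Set.mem_union]
      tauto
    · rintro a (ha | ha) b hb hadj
      · exact hno a ha b hb hadj
      · by_cases hac' : a = c
        · exact hno a (hac' ▸ hcA) b hb hadj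
        · exact hne b (hBW1 hb) a ha (hBc b hb) hac' hadj.symm
  -- walks realized inside one side
  have hClaim : ∀ (W1 W2 : Set X), IsClosed W1 → IsClosed W2 → c ∈ W1 → c ∈ W2 →
      W1 ∪ W2 = Set.univ → (∀ z, z ∈ W1 → z ∈ W2 → z = c) →
      (∀ p ∈ W1, ∀ q ∈ W2, p ≠ c → q ≠ c → ¬ H.Adj p q) →
      ∀ j : ℕ, ∀ p0, p0 ∈ W1 → ∃ w : (S.F j).graph.Walk (e.1 j) ((h p0).1 j),
        ∀ u ∈ w.support, ∃ p ∈ W1, (h p).1 j = u := by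
    intro W1 W2 hW1cl hW2cl hcW1 hcW2 hun hint hnoe j p0 hp0
    set R : Set (Fin (S.F j).card) :=
      {v | ∃ w : (S.F j).graph.Walk (e.1 j) v, ∀ u ∈ w.support, ∃ p ∈ W1, (h p).1 j = u}
      with hRdef
    set A : Set X := W1 ∩ ((fun p : X => (h p).1 j) ⁻¹' R) with hAdef
    set B : Set X := W1 ∩ ((fun p : X => (h p).1 j) ⁻¹' Rᶜ) with hBdef
    have hA_cl : IsClosed A := hW1cl.inter ((isClosed_discrete _).preimage (hCont j))
    have hB_cl : IsClosed B := hW1cl.inter ((isClosed_discrete _).preimage (hCont j))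
    have hhc : (h c).1 j = e.1 j := by rw [hc]
    have hcA : c ∈ A := by
      refine ⟨hcW1, ?_⟩
      show (h c).1 j ∈ R
      rw [hhc]
      refine ⟨Walk.nil, ?_⟩
      intro u hu
      simp only [Walk.support_nil, List.mem_singleton] at hu
      exact ⟨c, hcW1, by rw [hhc, hu]⟩
    have hAB : A ∪ B = W1 := by
      ext z
      simp only [hAdef, hBdef, Set.mem_union, Set.mem_inter_iff, Set.mem_preimage,
        Set.mem_compl_iff]
      by_cases hz : (h z).1 j ∈ R <;> tauto
    have hABdisj : Disjoint A B := by
      rw [Set.disjoint_left]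
      rintro z ⟨_, hz1⟩ ⟨_, hz2⟩
      exact hz2 hz1
    by_cases hBne : B.Nonempty
    · exfalso
      obtain ⟨p, hpA, q, hqB, hadj⟩ :=
        hGC W1 W2 hW2cl hcW2 hun hint hnoe A B hA_cl hB_cl hAB hABdisj hcA hBne
      have hER : PF.EdgeRel S (h p) (h q) := (show h p ≠ h q ∧ PF.EdgeRel S (h p) (h q) from (hedge p q).mp hadj).2
      have hpR : (h p).1 j ∈ R := hpA.2
      obtain ⟨w, hw⟩ := hpR
      refine hqB.2 ?_
      show (h q).1 j ∈ R
      rcases hER j with heq | hadj'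
      · rw [← heq]; exact ⟨w, hw⟩
      · refine ⟨w.concat hadj', ?_⟩
        intro u hu
        rw [Walk.support_concat, List.mem_append,
          List.mem_singleton] at hu
        rcases hu with hu | hu
        · exact hw u hu
        · exact ⟨q, hqB.1, hu.symm⟩
    · have hp0A : p0 ∈ A := by
        have : p0 ∈ A ∪ B := hAB ▸ hp0
        rcases this with hm | hm
        · exact hm
        · exact absurd ⟨p0, hm⟩ hBne
      exact hp0A.2
  -- the two marked points
  obtain ⟨as, has⟩ := hs_ne
  obtain ⟨bt, hbt⟩ := ht_ne
  have hxs' : (as : X) ∈ s' := ⟨as, has, rfl⟩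
  have hyt' : (bt : X) ∈ t' := ⟨bt, hbt, rfl⟩
  have hxWs : (as : X) ∈ Ws := Or.inl hxs'
  have hyWt : (bt : X) ∈ Wt := Or.inl hyt'
  set x₀ : PF.Limit S := h (as : X) with hx0def
  set y₀ : PF.Limit S := h (bt : X) with hy0def
  have hx0e : x₀ ≠ e := by
    rw [← hc]
    exact fun hh => as.2 (hinj hh)
  have hy0e : y₀ ≠ e := by
    rw [← hc]
    exact fun hh => bt.2 (hinj hh)
  have hdiff : ∀ (z w : PF.Limit S), z ≠ w → ∃ n₀ : ℕ, ∀ j, n₀ ≤ j → z.1 j ≠ w.1 j := by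
    intro z w hzw
    have hex : ∃ n, z.1 n ≠ w.1 n := by
      by_contra hcon
      push_neg at hcon
      exact hzw (Subtype.ext (funext hcon))
    obtain ⟨n, hn⟩ := hex
    exact ⟨n, fun j hj heq => hn (by rw [← z.2 j n hj, ← w.2 j n hj, heq])⟩
  obtain ⟨n1, hn1⟩ := hdiff x₀ e hx0e
  obtain ⟨n2, hn2⟩ := hdiff y₀ e hy0e
  set i₀ : ℕ := max N (max n1 n2) with hi₀def
  -- medians
  have hmed : ∀ j : ℕ, ∃ m, PF.Between (S.F j).graph (x₀.1 j) m (y₀.1 j) ∧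
      PF.Between (S.F j).graph (e.1 j) m (x₀.1 j) ∧
      PF.Between (S.F j).graph (e.1 j) m (y₀.1 j) :=
    fun j => EP.median_exists (hconnF j) (hacF j) _ _ _
  choose M hM1 hM2 hM3 using hmed
  -- realizability of the medians on both sides
  have hrealS : ∀ j : ℕ, ∃ p ∈ Ws, (h p).1 j = M j := by
    intro j
    obtain ⟨w, hw⟩ := hClaim Ws Wt hWs_cl hWt_cl hcWs hcWt hWsWt_union hWsWt_inter hnoedge
      j (as : X) hxWs
    exact hw (M j) (hM2 j w)
  have hrealT : ∀ j : ℕ, ∃ p ∈ Wt, (h p).1 j = M j := by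
    intro j
    have hun' : Wt ∪ Ws = Set.univ := by rw [Set.union_comm]; exact hWsWt_union
    have hint' : ∀ z, z ∈ Wt → z ∈ Ws → z = c := fun z h1 h2 => hWsWt_inter z h2 h1
    have hnoe' : ∀ p ∈ Wt, ∀ q ∈ Ws, p ≠ c → q ≠ c → ¬ H.Adj p q :=
      fun p hp q hq hpc hqc hadj => hnoedge q hq p hp hqc hpc hadj.symm
    obtain ⟨w, hw⟩ := hClaim Wt Ws hWt_cl hWs_cl hcWt hcWs hun' hint' hnoe' j (bt : X) hyWt
    exact hw (M j) (hM3 j w)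
  -- eventual collapse of the medians onto e
  have hE : ∀ i : ℕ, ∃ J, ∀ j, J ≤ j → ∀ hij : i ≤ j, S.bond j i hij (M j) = e.1 i := by
    intro i
    by_contra hcon
    push_neg at hcon
    set C : ℕ → Set (X × X) := fun n =>
      {pq | pq.1 ∈ Ws ∧ pq.2 ∈ Wt ∧ (h pq.1).1 n = (h pq.2).1 n ∧ (h pq.1).1 i ≠ e.1 i}
      with hCdef
    have hCanti : ∀ n, C (n + 1) ⊆ C n := by
      rintro n ⟨p, q⟩ ⟨h1, h2, h3, h4⟩
      refine ⟨h1, h2, ?_, h4⟩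
      rw [← (h p).2 (n+1) n (Nat.le_succ n), ← (h q).2 (n+1) n (Nat.le_succ n), h3]
    have hCmono : ∀ k l : ℕ, k ≤ l → C l ⊆ C k :=
      fun k l hkl => antitone_nat_of_succ_le (fun n => hCanti n) hkl
    have hCcl : ∀ n, IsClosed (C n) := by
      intro n
      have hCeq : C n = ({pq : X × X | pq.1 ∈ Ws} ∩ {pq | pq.2 ∈ Wt}) ∩
          ({pq : X × X | (h pq.1).1 n = (h pq.2).1 n} ∩ {pq | (h pq.1).1 i ≠ e.1 i}) := by
        ext z
        simp only [hCdef, Set.mem_setOf_eq, Set.mem_inter_iff]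
        tauto
      rw [hCeq]
      have c1 : IsClosed {pq : X × X | pq.1 ∈ Ws} := hWs_cl.preimage continuous_fst
      have c2 : IsClosed {pq : X × X | pq.2 ∈ Wt} := hWt_cl.preimage continuous_snd
      have c3 : IsClosed {pq : X × X | (h pq.1).1 n = (h pq.2).1 n} := by
        have hco : Continuous fun pq : X × X => ((h pq.1).1 n, (h pq.2).1 n) :=
          ((hCont n).comp continuous_fst).prodMk ((hCont n).comp continuous_snd)
        exact (isClosed_discrete {z : Fin (S.F n).card × Fin (S.F n).card | z.1 = z.2}).preimage
          hco
      have c4 : IsClosed {pq : X × X | (h pq.1).1 i ≠ e.1 i} := by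
        have hco : Continuous fun pq : X × X => (h pq.1).1 i := (hCont i).comp continuous_fst
        exact (isClosed_discrete {z : Fin (S.F i).card | z ≠ e.1 i}).preimage hco
      exact (c1.inter c2).inter (c3.inter c4)
    have hCne : ∀ n, (C n).Nonempty := by
      intro n
      obtain ⟨j, hjn, hij, hbad⟩ := hcon n
      obtain ⟨p, hpWs, hpj⟩ := hrealS j
      obtain ⟨q, hqWt, hqj⟩ := hrealT j
      have hmem : (p, q) ∈ C j := by
        refine ⟨hpWs, hqWt, by rw [hpj, hqj], ?_⟩
        rw [← (h p).2 j i hij, hpj]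
        exact hbad
      exact ⟨(p, q), hCmono n j hjn hmem⟩
    obtain ⟨⟨p, q⟩, hpq⟩ := IsCompact.nonempty_iInter_of_sequence_nonempty_isCompact_isClosed
      C hCanti hCne (hCcl 0).isCompact hCcl
    have h1 : ∀ n, (p, q) ∈ C n := fun n => Set.mem_iInter.mp hpq n
    have hpq_eq : h p = h q := Subtype.ext (funext fun n => (h1 n).2.2.1)
    have hp_eq_c : p = c := hWsWt_inter p (h1 0).1 (by rw [hinj hpq_eq]; exact (h1 0).2.1)
    exact (h1 i).2.2.2 (by rw [hp_eq_c, hc])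
  -- the medians are ramification points eventually
  have hMe : ∀ j, i₀ ≤ j → M j ≠ e.1 j := by
    intro j hj hMej
    have hb : PF.Between (S.F j).graph (x₀.1 j) (e.1 j) (y₀.1 j) := hMej ▸ hM1 j
    have hxj : x₀.1 j ≠ e.1 j := hn1 j (le_trans (le_trans (le_max_left n1 n2) (le_max_right N _)) hj)
    have hyj : y₀.1 j ≠ e.1 j := hn2 j (le_trans (le_trans (le_max_right n1 n2) (le_max_right N _)) hj)
    have h2 := EP.ord_ge_two_of_between (hconnF j) (hacF j) hb (Ne.symm hxj) (Ne.symm hyj)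
    have h1 := hN j (le_trans (le_max_left N _) hj)
    omega
  obtain ⟨J₀, hJ₀⟩ := hE i₀
  set J₁ : ℕ := max i₀ J₀ with hJ₁def
  have hi₀J₁ : i₀ ≤ J₁ := le_max_left _ _
  have hMx : ∀ j, J₁ ≤ j → M j ≠ x₀.1 j := by
    intro j hj heq
    have hb := hJ₀ j (le_trans (le_max_right i₀ J₀) hj) (le_trans hi₀J₁ hj)
    rw [heq, x₀.2 j i₀ (le_trans hi₀J₁ hj)] at hb
    exact hn1 i₀ (le_trans (le_max_left n1 n2) (le_max_right N _)) hb
  have hMy : ∀ j, J₁ ≤ j → M j ≠ y₀.1 j := by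
    intro j hj heq
    have hb := hJ₀ j (le_trans (le_max_right i₀ J₀) hj) (le_trans hi₀J₁ hj)
    rw [heq, y₀.2 j i₀ (le_trans hi₀J₁ hj)] at hb
    exact hn2 i₀ (le_trans (le_max_right n1 n2) (le_max_right N _)) hb
  have hord3 : ∀ j, J₁ ≤ j → 3 ≤ PF.ord (S.F j).graph (M j) := by
    intro j hj
    have hi₀j : i₀ ≤ j := le_trans hi₀J₁ hj
    exact EP.ord_ge_three (hconnF j)
      (Ne.symm (hMe j hi₀j)) (Ne.symm (hMx j hj)) (Ne.symm (hMy j hj))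
      (fun hsc => EP.not_between_of_sameComp hsc (hM2 j))
      (fun hsc => EP.not_between_of_sameComp hsc (hM3 j))
      (fun hsc => EP.not_between_of_sameComp hsc (hM1 j))
  -- coherence of the median thread, via weak coherence
  have hCOH : ∀ j, J₁ ≤ j → S.bond (j+1) j (Nat.le_succ j) (M (j+1)) = M j := by
    intro j hj
    have hi₀j : i₀ ≤ j := le_trans hi₀J₁ hj
    obtain ⟨b, hb1, _hb2, hb3⟩ :=
      (hwc _ _ _ (S.bond_mor (j+1) j (Nat.le_succ j))).2 (M j) (hord3 j hj)
    have hfe : S.bond (j+1) j (Nat.le_succ j) (e.1 (j+1)) = e.1 j := e.2 (j+1) j (Nat.le_succ j)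
    have hfx : S.bond (j+1) j (Nat.le_succ j) (x₀.1 (j+1)) = x₀.1 j := x₀.2 (j+1) j (Nat.le_succ j)
    have hfy : S.bond (j+1) j (Nat.le_succ j) (y₀.1 (j+1)) = y₀.1 j := y₀.2 (j+1) j (Nat.le_succ j)
    have hne_e : S.bond (j+1) j (Nat.le_succ j) (e.1 (j+1)) ≠ M j := by
      rw [hfe]; exact Ne.symm (hMe j hi₀j)
    have hne_x : S.bond (j+1) j (Nat.le_succ j) (x₀.1 (j+1)) ≠ M j := by
      rw [hfx]; exact Ne.symm (hMx j hj)
    have hne_y : S.bond (j+1) j (Nat.le_succ j) (y₀.1 (j+1)) ≠ M j := by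
      rw [hfy]; exact Ne.symm (hMy j hj)
    have hd_ex : ¬ PF.SameComp (S.F j).graph (M j) (e.1 j) (x₀.1 j) :=
      fun hsc => EP.not_between_of_sameComp hsc (hM2 j)
    have hd_ey : ¬ PF.SameComp (S.F j).graph (M j) (e.1 j) (y₀.1 j) :=
      fun hsc => EP.not_between_of_sameComp hsc (hM3 j)
    have hd_xy : ¬ PF.SameComp (S.F j).graph (M j) (x₀.1 j) (y₀.1 j) :=
      fun hsc => EP.not_between_of_sameComp hsc (hM1 j)
    have hu_ex : ¬ PF.SameComp (S.F (j+1)).graph b (e.1 (j+1)) (x₀.1 (j+1)) := by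
      intro hsc
      have := (hb3 _ _ hne_e hne_x).mpr hsc
      rw [hfe, hfx] at this
      exact hd_ex this
    have hu_ey : ¬ PF.SameComp (S.F (j+1)).graph b (e.1 (j+1)) (y₀.1 (j+1)) := by
      intro hsc
      have := (hb3 _ _ hne_e hne_y).mpr hsc
      rw [hfe, hfy] at this
      exact hd_ey this
    have hu_xy : ¬ PF.SameComp (S.F (j+1)).graph b (x₀.1 (j+1)) (y₀.1 (j+1)) := by
      intro hsc
      have := (hb3 _ _ hne_x hne_y).mpr hsc
      rw [hfx, hfy] at this
      exact hd_xy this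
    have hbe : e.1 (j+1) ≠ b := fun hh => hne_e (by rw [← hh] at hb1; exact hb1)
    have hbx : x₀.1 (j+1) ≠ b := fun hh => hne_x (by rw [← hh] at hb1; exact hb1)
    have hby : y₀.1 (j+1) ≠ b := fun hh => hne_y (by rw [← hh] at hb1; exact hb1)
    have hube : PF.Between (S.F (j+1)).graph (e.1 (j+1)) b (x₀.1 (j+1)) :=
      EP.between_of_not_sameComp hbe hbx hu_ex
    have huby : PF.Between (S.F (j+1)).graph (e.1 (j+1)) b (y₀.1 (j+1)) :=
      EP.between_of_not_sameComp hbe hby hu_ey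
    have hubxy : PF.Between (S.F (j+1)).graph (x₀.1 (j+1)) b (y₀.1 (j+1)) :=
      EP.between_of_not_sameComp hbx hby hu_xy
    have hMb : M (j+1) = b :=
      EP.median_unique (hconnF (j+1)) (hacF (j+1)) (hM1 (j+1)) (hM2 (j+1)) (hM3 (j+1))
        hubxy hube huby
    rw [hMb]
    exact hb1
  -- chain the coherences down to level J₁
  have hchain : ∀ j, J₁ ≤ j → ∀ hj : J₁ ≤ j, S.bond j J₁ hj (M j) = M J₁ := by
    intro j hj
    induction j, hj using Nat.le_induction with
    | base => intro _; exact S.bond_refl J₁ (M J₁)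
    | succ j hj ih =>
      intro h'
      rw [← S.bond_comp (j+1) j J₁ hj (Nat.le_succ j) (M (j+1)), hCOH j hj]
      exact ih hj
  obtain ⟨J₃, hJ₃⟩ := hE J₁
  have hle1 : J₁ ≤ max J₁ J₃ := le_max_left _ _
  have hle2 : J₃ ≤ max J₁ J₃ := le_max_right _ _
  have hfin1 := hchain (max J₁ J₃) hle1 hle1
  have hfin2 := hJ₃ (max J₁ J₃) hle2 hle1
  exact hMe J₁ hi₀J₁ (by rw [← hfin1, hfin2])
end

section
/- Let A and B be finite trees, let i : A → B be an immersion, and let f : B → A be a monotone epimorphism such that: (1) f(i(a)) = a for every a ∈ A; (2) f(b) = a for every a ∈ A and every vertex b lying in a connected component of B∖{i(a)} that contains no point of i(A); and (3) f(b) ∈ {a, a'} for all a ≠ a' adjacent in A and every b ∈ C_{a,a'}, where C_{a,a'} is the intersection of the connected component of B∖{i(a)} containing i(a') with the connected component of B∖{i(a')} containing i(a). Then f is weakly coherent. -/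
open SimpleGraph

section AuxLemmas

open SimpleGraph Walk

variable {V : Type*} {T : SimpleGraph V}

lemma PF.reach_del_of_walk {a : V} :
    ∀ {x y : V} (p : T.Walk x y), a ∉ p.support →
      ∀ (hx : x ≠ a) (hy : y ≠ a), (PF.del T a).Reachable ⟨x, hx⟩ ⟨y, hy⟩ := by
  intro x y p
  induction p with
  | nil => intro _ hx hy; exact Reachable.refl _
  | @cons u w z h q ih =>
    intro hp hu hz
    rw [Walk.support_cons, List.mem_cons] at hp
    push_neg at hp
    have hw : w ≠ a := fun hh => hp.2 (hh ▸ q.start_mem_support)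
    exact (Adj.reachable (show (PF.del T a).Adj ⟨u, hu⟩ ⟨w, hw⟩ from h)).trans
      (ih hp.2 hw hz)

/-- A walk in `del T a` maps to a walk in `T` avoiding `a`, and conversely. -/
lemma PF.sameComp_iff_walk {a x y : V} :
    PF.SameComp T a x y ↔ ∃ p : T.Walk x y, a ∉ p.support := by
  constructor
  · rintro ⟨hx, hy, ⟨q⟩⟩
    refine ⟨q.map ⟨Subtype.val, fun h => h⟩, ?_⟩
    intro ha
    rw [Walk.support_map] at ha
    obtain ⟨u, hu, hval⟩ := List.mem_map.mp ha
    exact u.2 hval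
  · rintro ⟨p, hp⟩
    have hx : x ≠ a := fun h => hp (h ▸ p.start_mem_support)
    have hy : y ≠ a := fun h => hp (h ▸ p.end_mem_support)
    exact ⟨hx, hy, PF.reach_del_of_walk p hp hx hy⟩

lemma PF.sameComp_symm {a x y : V} (h : PF.SameComp T a x y) : PF.SameComp T a y x := by
  obtain ⟨hx, hy, hr⟩ := h; exact ⟨hy, hx, hr.symm⟩

lemma PF.sameComp_trans {a x y z : V} (h : PF.SameComp T a x y) (h' : PF.SameComp T a y z) :
    PF.SameComp T a x z := by
  obtain ⟨hx, hy, hr⟩ := h; obtain ⟨hy', hz, hr'⟩ := h'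
  exact ⟨hx, hz, hr.trans hr'⟩

lemma PF.sameComp_refl {a x : V} (h : x ≠ a) : PF.SameComp T a x x :=
  ⟨h, h, Reachable.refl _⟩

/-- The unique path between two vertices of a tree. -/
noncomputable def PF.tpath (hT : T.IsTree) (x y : V) : T.Walk x y :=
  (hT.existsUnique_path x y).choose

lemma PF.tpath_isPath (hT : T.IsTree) (x y : V) : (PF.tpath hT x y).IsPath :=
  (hT.existsUnique_path x y).choose_spec.1

lemma PF.tpath_unique (hT : T.IsTree) {x y : V} {p : T.Walk x y} (hp : p.IsPath) :
    p = PF.tpath hT x y :=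
  (hT.existsUnique_path x y).choose_spec.2 p hp

lemma PF.between_of_mem_path (hT : T.IsTree) {x y z : V} {p : T.Walk x z}
    (hp : p.IsPath) (hy : y ∈ p.support) : PF.Between T x y z := by
  classical
  intro q
  have h1 : p = PF.tpath hT x z := PF.tpath_unique hT hp
  have h2 : q.bypass = PF.tpath hT x z := PF.tpath_unique hT q.bypass_isPath
  exact q.support_bypass_subset (by rw [h2, ← h1]; exact hy)

lemma PF.sameComp_iff_not_between {a x y : V} :
    PF.SameComp T a x y ↔ ¬ PF.Between T x a y := by
  rw [PF.sameComp_iff_walk]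
  unfold PF.Between
  push_neg
  rfl

lemma PF.not_between_both (hT : T.IsTree) {x y c : V} (hxy : x ≠ y) :
    ¬ (PF.Between T c x y ∧ PF.Between T c y x) := by
  classical
  rintro ⟨h1, h2⟩
  set r : T.Walk c x := PF.tpath hT c x with hr
  have hyr : y ∈ r.support := h2 r
  have hxt : x ∈ (r.takeUntil y hyr).support := h1 (r.takeUntil y hyr)
  have hxd : x ∈ (r.dropUntil y hyr).support := (r.dropUntil y hyr).end_mem_support
  have hnd : r.support.Nodup := (PF.tpath_isPath hT c x).support_nodup
  rw [← r.take_spec hyr, Walk.support_append, List.nodup_append] at hnd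
  have hxdt : x ∈ (r.dropUntil y hyr).support.tail := by
    rcases List.mem_cons.mp
      ((Walk.support_eq_cons (r.dropUntil y hyr)) ▸ hxd) with h | h
    · exact absurd h hxy
    · exact h
  exact hnd.2.2 x hxt x hxdt rfl

lemma PF.between_of_adj_adj (hT : T.IsTree) {a' a a'' : V}
    (h1 : T.Adj a' a) (h2 : T.Adj a a'') (hne : a' ≠ a'') : PF.Between T a' a a'' := by
  have hw : (Walk.cons h1 (Walk.cons h2 Walk.nil)).IsPath := by
    rw [Walk.isPath_def]
    simp [h1.ne, h2.ne, hne]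
  exact PF.between_of_mem_path hT hw (by simp)

end AuxLemmas

/-- Let `A` and `B` be finite trees, `i : A → B` an immersion, and
`f : B → A` a monotone epimorphism such that (1) `f (i a) = a` for every `a`;
(2) `f b = a` whenever `b` lies in a connected component of `B ∖ {i a}` containing no
point of `i(A)`; and (3) `f b ∈ {a, a'}` for all `a ≠ a'` adjacent in `A` and every
`b ∈ C_{a,a'}`.  Then `f` is weakly coherent. -/
theorem weaklyCoherent_of_immersion_compatible {α β : Type} [Fintype α] [Fintype β]
    (A : SimpleGraph α) (B : SimpleGraph β)
    (hA : A.IsTree) (hB : B.IsTree)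
    (i : α → β) (hi : PF.IsImmersion A B i)
    (f : β → α) (hepi : PF.IsEpi B A f) (hmono : PF.IsMonotone B f)
    (h1 : ∀ a : α, f (i a) = a)
    (h2 : ∀ (a : α) (b : β), b ≠ i a →
      (∀ a' : α, ¬ PF.SameComp B (i a) b (i a')) → f b = a)
    (h3 : ∀ a a' : α, A.Adj a a' → ∀ b : β,
      PF.SameComp B (i a) b (i a') → PF.SameComp B (i a') b (i a) →
      f b = a ∨ f b = a') :
    PF.WeaklyCoherent A B f := by
  classical
  intro a ha
  -- `α` has at least 3 elements
  have hcard3 : 3 ≤ Fintype.card α := by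
    have h1' : Nat.card (A.neighborSet a) ≤ Nat.card α :=
      Nat.card_le_card_of_injective Subtype.val Subtype.val_injective
    have h2' := le_trans ha h1'
    rwa [Nat.card_eq_fintype_card] at h2'
  have hthird : ∀ x y : α, ∃ c, c ≠ x ∧ c ≠ y := by
    intro x y
    by_contra hc
    push_neg at hc
    have hsub : (Finset.univ : Finset α) ⊆ {x, y} := by
      intro c _
      rcases eq_or_ne c x with h | h
      · simp [h]
      · simp [hc c h]
    have h2' := Finset.card_le_card hsub
    rw [Finset.card_univ] at h2'
    have h3' : ({x, y} : Finset α).card ≤ 2 := by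
      refine le_trans (Finset.card_insert_le x {y}) ?_
      simp
    omega
  -- `i` is injective
  have inj : Function.Injective i := by
    intro x y hixy
    by_contra hxy
    obtain ⟨c, hcx, hcy⟩ := hthird x y
    by_cases hbet : PF.Between A c y x
    · have hnb : ¬ PF.Between A c x y := fun h => PF.not_between_both hA hxy ⟨h, hbet⟩
      rw [hi c x y hcx hxy hcy] at hnb
      exact hnb (fun q => by rw [hixy]; exact q.end_mem_support)
    · rw [hi c y x hcy (Ne.symm hxy) hcx] at hbet
      exact hbet (fun q => by rw [← hixy]; exact q.end_mem_support)
  -- transfer of components along `i`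
  have lemI : ∀ a' a'' : α, a' ≠ a → a'' ≠ a →
      (PF.SameComp A a a' a'' ↔ PF.SameComp B (i a) (i a') (i a'')) := by
    intro a' a'' h1' h2'
    rcases eq_or_ne a' a'' with rfl | hne
    · constructor
      · intro _; exact PF.sameComp_refl (fun h => h1' (inj h))
      · intro _; exact PF.sameComp_refl h1'
    · rw [PF.sameComp_iff_not_between, PF.sameComp_iff_not_between]
      exact not_congr (hi a' a a'' h1' (Ne.symm h2') hne)
  -- every point outside the fiber of `a` is in the same component of `B ∖ {i a}`
  -- as the `i`-image of its `f`-value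
  have lemM : ∀ z : β, f z ≠ a → PF.SameComp B (i a) z (i (f z)) := by
    intro z hz
    obtain ⟨q⟩ := (hmono (f z)).preconnected ⟨z, rfl⟩ ⟨i (f z), h1 (f z)⟩
    rw [PF.sameComp_iff_walk]
    refine ⟨q.map ⟨Subtype.val, fun h => h⟩, ?_⟩
    intro hmem
    rw [SimpleGraph.Walk.support_map] at hmem
    obtain ⟨u, hu, hval⟩ := List.mem_map.mp hmem
    have hufz : f (u : β) = f z := u.2
    rw [show (u : β) = i a from hval, h1 a] at hufz
    exact hz hufz.symm
  -- orders compare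
  have part2 : PF.ord A a ≤ PF.ord B (i a) := by
    have key : ∀ a' : α, A.Adj a a' →
        ∃ s : β, B.Adj (i a) s ∧ PF.SameComp B (i a) s (i a') := by
      intro a' ha'
      have hne : i a ≠ i a' := fun h => ha'.ne (inj h)
      set q : B.Walk (i a) (i a') := PF.tpath hB (i a) (i a') with hq
      have hnil : ¬ q.Nil := SimpleGraph.Walk.not_nil_of_ne hne
      refine ⟨q.getVert 1, q.adj_snd hnil, ?_⟩
      rw [PF.sameComp_iff_walk]
      refine ⟨q.tail, ?_⟩
      rw [SimpleGraph.Walk.support_tail_of_not_nil q hnil]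
      have hnd : q.support.Nodup := (PF.tpath_isPath hB _ _).support_nodup
      rw [SimpleGraph.Walk.support_eq_cons q] at hnd
      exact (List.nodup_cons.mp hnd).1
    have hchoice : ∀ x : (A.neighborSet a),
        ∃ s : (B.neighborSet (i a)), PF.SameComp B (i a) s.1 (i x.1) := by
      intro x
      obtain ⟨s, hs1, hs2⟩ := key x.1 ((A.mem_neighborSet a x.1).mp x.2)
      exact ⟨⟨s, (B.mem_neighborSet (i a) s).mpr hs1⟩, hs2⟩
    choose F hF using hchoice
    have hFinj : Function.Injective F := by
      intro x y hxy
      have h2' : PF.SameComp B (i a) (i x.1) (i y.1) :=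
        PF.sameComp_trans (PF.sameComp_symm (hF x)) (by rw [hxy]; exact hF y)
      have hax : A.Adj a x.1 := (A.mem_neighborSet a x.1).mp x.2
      have hay : A.Adj a y.1 := (A.mem_neighborSet a y.1).mp y.2
      by_contra hxyne
      have hne : x.1 ≠ y.1 := fun h => hxyne (Subtype.ext h)
      have hsc : PF.SameComp A a x.1 y.1 := (lemI x.1 y.1 hax.ne' hay.ne').mpr h2'
      rw [PF.sameComp_iff_not_between] at hsc
      exact hsc (PF.between_of_adj_adj hA hax.symm hay hne)
    exact Nat.card_le_card_of_injective F hFinj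
  refine ⟨i a, h1 a, part2, ?_⟩
  intro x y hfx hfy
  have Mx := lemM x hfx
  have My := lemM y hfy
  have hI := lemI (f x) (f y) hfx hfy
  constructor
  · intro h
    exact PF.sameComp_trans (PF.sameComp_trans Mx (hI.mp h)) (PF.sameComp_symm My)
  · intro h
    exact hI.mpr (PF.sameComp_trans (PF.sameComp_trans (PF.sameComp_symm Mx) h) My)
end
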